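/- In a regular category, an object r with the canonical comonoid structure given by the diagonal δ : r ⟶ r × r and the unique map ε : r ⟶ 1 yields, upon passing to the relations po-category, an adjoint commutative monoid structure on r: the graph of δ and graph of ε are left adjoints, and their right adjoints (the cographs) equip r with a commutative monoid structure in Rel(R) whose structure maps are right adjoints. -/

import Mathlib

open CategoryTheory CategoryTheory.Limits

universe v u

variable {C : Type u} [Category.{v} C]

namespace RegularLogic

variable [HasFiniteLimits C] [HasImages C]

/-- The graph of `f : X ⟶ s`, as a relation `X ⇸ s` in `Rel(C)`:
the subobject `⟨𝟙 X, f⟩ ⊆ X ⨯ s`. -/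
noncomputable def graphRel {X s : C} (f : X ⟶ s) : Subobject (X ⨯ s) :=
  Subobject.mk (prod.lift (𝟙 X) f)

/-- The cograph of `g : X ⟶ r`, as a relation `r ⇸ X` in `Rel(C)`:
the subobject `⟨g, 𝟙 X⟩ ⊆ r ⨯ X`. -/
noncomputable def cographRel {X r : C} (g : X ⟶ r) : Subobject (r ⨯ X) :=
  Subobject.mk (prod.lift g (𝟙 X))

/-- The identity relation on `r`: the diagonal subobject of `r ⨯ r`. -/
noncomputable def idRel (r : C) : Subobject (r ⨯ r) :=
  graphRel (𝟙 r)

/-- Composition of relations in `Rel(C)`: pull back over the middle object and take the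
image of the induced map into `r ⨯ t`. -/
noncomputable def relComp {r s t : C} (x : Subobject (r ⨯ s)) (y : Subobject (s ⨯ t)) :
    Subobject (r ⨯ t) :=
  Subobject.mk (image.ι (prod.lift
    (pullback.fst (x.arrow ≫ prod.snd) (y.arrow ≫ prod.fst) ≫ x.arrow ≫ prod.fst)
    (pullback.snd (x.arrow ≫ prod.snd) (y.arrow ≫ prod.fst) ≫ y.arrow ≫ prod.snd)))

end RegularLogic

namespace RegularLogic

variable [HasFiniteLimits C] [HasImages C]

/-- The tensor (monoidal product) of two relations in `Rel(C)`, as a subobject of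
`(a ⨯ c) ⨯ (b ⨯ d)`: the meet of the pullbacks of `x` and `y` along the evident
projections. -/
noncomputable def relTensor {a b c d : C} (x : Subobject (a ⨯ b)) (y : Subobject (c ⨯ d)) :
    Subobject ((a ⨯ c) ⨯ (b ⨯ d)) :=
  (Subobject.pullback (prod.map (prod.fst : a ⨯ c ⟶ a) (prod.fst : b ⨯ d ⟶ b))).obj x ⊓
  (Subobject.pullback (prod.map (prod.snd : a ⨯ c ⟶ c) (prod.snd : b ⨯ d ⟶ d))).obj y

end RegularLogic

open RegularLogic


/-!
Cographs turn composition and tensor of relations into composition and product of morphisms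
(`relComp_cographRel`, `relTensor_cographRel`), and the graph of an isomorphism is the cograph of
its inverse. Hence each monoid law for the cographs of `δ` and `ε` is the cograph of the
corresponding comonoid law of `(δ, ε)` in the cartesian structure of `C`. The adjunction
`graphRel f ⊣ cographRel f` holds for every morphism `f`, by a computation with generalized
elements: the pairs `(x, x')` with `f x = f x'` contain the diagonal, and the pairs `(f x, f x)`
lie on it.
-/

attribute [local simp] prod.lift_fst prod.lift_snd prod.lift_fst_assoc prod.lift_snd_assoc

theorem CategoryTheory.Subobject.mk_factors_iff_exists {X Y Z : C} (f : Y ⟶ X) [Mono f]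
    (g : Z ⟶ X) : (Subobject.mk f).Factors g ↔ ∃ h : Z ⟶ Y, h ≫ f = g :=
  Iff.rfl

theorem CategoryTheory.Subobject.le_of_forall_factors {X : C} {P Q : Subobject X}
    (h : ∀ {T : C} (a : T ⟶ X), P.Factors a → Q.Factors a) : P ≤ Q :=
  Subobject.le_of_factors (h _ P.factors_self)

namespace RegularLogic

section

variable [HasFiniteLimits C]

theorem graphRel_factors_iff {X s T : C} (f : X ⟶ s) (a : T ⟶ X ⨯ s) :
    (graphRel f).Factors a ↔ a ≫ prod.fst ≫ f = a ≫ prod.snd := by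
  rw [graphRel, Subobject.mk_factors_iff_exists]
  constructor
  · rintro ⟨u, rfl⟩
    simp
  · intro h
    exact ⟨a ≫ prod.fst, by ext <;> simp [h]⟩

theorem cographRel_factors_iff {X r T : C} (g : X ⟶ r) (a : T ⟶ r ⨯ X) :
    (cographRel g).Factors a ↔ a ≫ prod.snd ≫ g = a ≫ prod.fst := by
  rw [cographRel, Subobject.mk_factors_iff_exists]
  constructor
  · rintro ⟨u, rfl⟩
    simp
  · intro h
    exact ⟨a ≫ prod.snd, by ext <;> simp [h]⟩

theorem idRel_eq_cographRel (X : C) : idRel X = cographRel (𝟙 X) :=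
  rfl

theorem graphRel_eq_cographRel {X s : C} (e : X ≅ s) : graphRel e.hom = cographRel e.inv :=
  Subobject.mk_eq_mk_of_comm _ _ e (by ext <;> simp)

theorem relTensor_factors_iff {a b c d T : C} (x : Subobject (a ⨯ b)) (y : Subobject (c ⨯ d))
    (t : T ⟶ (a ⨯ c) ⨯ (b ⨯ d)) :
    (relTensor x y).Factors t ↔
      x.Factors (t ≫ prod.map prod.fst prod.fst) ∧ y.Factors (t ≫ prod.map prod.snd prod.snd) := by
  simp only [relTensor, Subobject.inf_factors, Limits.pullback_factors_iff]

theorem relTensor_cographRel {A B a c : C} (f : A ⟶ a) (g : B ⟶ c) :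
    relTensor (cographRel f) (cographRel g) = cographRel (prod.map f g) := by
  refine le_antisymm (Subobject.le_of_forall_factors fun t ht ↦ ?_)
    (Subobject.le_of_forall_factors fun t ht ↦ ?_) <;>
  simp only [relTensor_factors_iff, cographRel_factors_iff, Category.assoc,
    prod.map_snd_assoc] at ht ⊢
  · ext <;> simp [ht.1, ht.2]
  · exact ⟨by simpa using congrArg (· ≫ prod.fst) ht, by simpa using congrArg (· ≫ prod.snd) ht⟩

end

variable [HasFiniteLimits C] [HasImages C]

theorem relComp_le {r s t : C} {x : Subobject (r ⨯ s)} {y : Subobject (s ⨯ t)}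
    {z : Subobject (r ⨯ t)}
    (h : ∀ {T : C} (a : T ⟶ r ⨯ s) (b : T ⟶ s ⨯ t), x.Factors a → y.Factors b →
      a ≫ prod.snd = b ≫ prod.fst → z.Factors (prod.lift (a ≫ prod.fst) (b ≫ prod.snd))) :
    relComp x y ≤ z :=
  imageSubobject_le _ (z.factorThru _ (h _ _ (Subobject.factors_comp_arrow _)
    (Subobject.factors_comp_arrow _) (by simpa using pullback.condition)))
    (by simp)

theorem factors_relComp {r s t T : C} {x : Subobject (r ⨯ s)} {y : Subobject (s ⨯ t)}
    {a : T ⟶ r ⨯ s} {b : T ⟶ s ⨯ t} (ha : x.Factors a) (hb : y.Factors b)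
    (hab : a ≫ prod.snd = b ≫ prod.fst) :
    (relComp x y).Factors (prod.lift (a ≫ prod.fst) (b ≫ prod.snd)) := by
  have w : x.factorThru a ha ≫ x.arrow ≫ prod.snd = y.factorThru b hb ≫ y.arrow ≫ prod.fst := by
    simpa using hab
  show (imageSubobject _).Factors _
  convert imageSubobject_factors_comp_self _ (pullback.lift _ _ w) using 1
  ext <;> simp [pullback.lift_fst_assoc, pullback.lift_snd_assoc]

theorem relComp_cographRel {X Y Z : C} (g : Y ⟶ X) (f : Z ⟶ Y) :
    relComp (cographRel g) (cographRel f) = cographRel (f ≫ g) := by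
  refine le_antisymm (relComp_le fun a b ha hb hab ↦ ?_)
    (Subobject.le_of_forall_factors fun t ht ↦ ?_)
  · rw [cographRel_factors_iff] at ha hb ⊢
    simp only [prod.lift_snd_assoc, prod.lift_fst, Category.assoc]
    rw [reassoc_of% hb, ← reassoc_of% hab, ha]
  · rw [cographRel_factors_iff] at ht
    convert factors_relComp (a := prod.lift (t ≫ prod.fst) (t ≫ prod.snd ≫ f))
      (b := prod.lift (t ≫ prod.snd ≫ f) (t ≫ prod.snd)) ?_ ?_ (by simp) using 1
    · ext <;> simp
    all_goals rw [cographRel_factors_iff]; simp [← ht]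

theorem idRel_le_relComp_graphRel_cographRel {X s : C} (f : X ⟶ s) :
    idRel X ≤ relComp (graphRel f) (cographRel f) := by
  refine Subobject.le_of_forall_factors fun t ht ↦ ?_
  rw [idRel, graphRel_factors_iff, Category.comp_id] at ht
  convert factors_relComp (a := prod.lift (t ≫ prod.fst) (t ≫ prod.fst ≫ f))
    (b := prod.lift (t ≫ prod.fst ≫ f) (t ≫ prod.snd)) ?_ ?_ (by simp) using 1
  · ext <;> simp
  · simp [graphRel_factors_iff]
  · simp [cographRel_factors_iff, reassoc_of% ht]

theorem relComp_cographRel_graphRel_le_idRel {X s : C} (f : X ⟶ s) :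
    relComp (cographRel f) (graphRel f) ≤ idRel s := by
  refine relComp_le fun a b ha hb hab ↦ ?_
  rw [cographRel_factors_iff] at ha
  rw [graphRel_factors_iff] at hb
  rw [idRel, graphRel_factors_iff]
  simp [← ha, ← hb, reassoc_of% hab]

end RegularLogic

theorem statement19_general {C : Type u} [Category.{v} C] [HasFiniteLimits C] [HasImages C]
    (r : C) :
    -- the graph of the diagonal is left adjoint to its cograph μ
    (idRel r ≤ relComp (graphRel (diag r)) (cographRel (diag r)) ∧
      relComp (cographRel (diag r)) (graphRel (diag r)) ≤ idRel (r ⨯ r)) ∧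
    -- the graph of the terminal map is left adjoint to its cograph η
    (idRel r ≤ relComp (graphRel (terminal.from r)) (cographRel (terminal.from r)) ∧
      relComp (cographRel (terminal.from r)) (graphRel (terminal.from r)) ≤
        idRel (⊤_ C)) ∧
    -- left unitality
    relComp (relTensor (cographRel (terminal.from r)) (idRel r)) (cographRel (diag r)) =
      graphRel (prod.snd : (⊤_ C) ⨯ r ⟶ r) ∧
    -- right unitality
    relComp (relTensor (idRel r) (cographRel (terminal.from r))) (cographRel (diag r)) =
      graphRel (prod.fst : r ⨯ (⊤_ C) ⟶ r) ∧
    -- associativity (up to the associator of the cartesian product)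
    relComp (relTensor (cographRel (diag r)) (idRel r)) (cographRel (diag r)) =
      relComp
        (graphRel (prod.lift (prod.fst ≫ prod.fst)
          (prod.lift (prod.fst ≫ prod.snd) prod.snd) : (r ⨯ r) ⨯ r ⟶ r ⨯ (r ⨯ r)))
        (relComp (relTensor (idRel r) (cographRel (diag r))) (cographRel (diag r))) ∧
    -- commutativity (precomposition with the braiding)
    relComp (graphRel (prod.lift prod.snd prod.fst : r ⨯ r ⟶ r ⨯ r))
        (cographRel (diag r)) =
      cographRel (diag r) := by
  simp only [idRel_eq_cographRel r, relTensor_cographRel, relComp_cographRel]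
  rw [← prod.leftUnitor_hom, ← prod.rightUnitor_hom, ← prod.associator_hom, ← prod.braiding_hom]
  simp only [graphRel_eq_cographRel, relComp_cographRel]
  refine ⟨⟨idRel_le_relComp_graphRel_cographRel _, relComp_cographRel_graphRel_le_idRel _⟩,
    ⟨idRel_le_relComp_graphRel_cographRel _, relComp_cographRel_graphRel_le_idRel _⟩,
    ?_, ?_, ?_, ?_⟩ <;>
  congr 1 <;> ext <;> simp

/-- In the relations po-category of a regular category, each object `r` carries a
canonical adjoint commutative monoid structure: the graphs of the diagonal
`δ : r ⟶ r ⨯ r` and of the terminal map `ε : r ⟶ 1` are left adjoints, and their right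
adjoints, the cographs `μ := ⟨δ, 𝟙⟩` and `η := ⟨ε, 𝟙⟩`, make `r` a commutative monoid
object in `Rel(C)` (unitality, associativity and commutativity hold up to the canonical
structure isomorphisms of the cartesian product) whose structure maps are right
adjoints. -/
theorem statement19 {C : Type u} [Category.{v} C] [HasFiniteLimits C] [HasImages C]
    [hker : ∀ {X Y : C} (f : X ⟶ Y), HasCoequalizer (pullback.fst f f) (pullback.snd f f)]
    (hstab : ∀ {X Y Z : C} (f : X ⟶ Y) (g : Z ⟶ Y),
      Nonempty (RegularEpi f) → Nonempty (RegularEpi (pullback.snd f g)))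
    (r : C) :
    -- the graph of the diagonal is left adjoint to its cograph μ
    (idRel r ≤ relComp (graphRel (diag r)) (cographRel (diag r)) ∧
      relComp (cographRel (diag r)) (graphRel (diag r)) ≤ idRel (r ⨯ r)) ∧
    -- the graph of the terminal map is left adjoint to its cograph η
    (idRel r ≤ relComp (graphRel (terminal.from r)) (cographRel (terminal.from r)) ∧
      relComp (cographRel (terminal.from r)) (graphRel (terminal.from r)) ≤
        idRel (⊤_ C)) ∧
    -- left unitality
    relComp (relTensor (cographRel (terminal.from r)) (idRel r)) (cographRel (diag r)) =
      graphRel (prod.snd : (⊤_ C) ⨯ r ⟶ r) ∧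
    -- right unitality
    relComp (relTensor (idRel r) (cographRel (terminal.from r))) (cographRel (diag r)) =
      graphRel (prod.fst : r ⨯ (⊤_ C) ⟶ r) ∧
    -- associativity (up to the associator of the cartesian product)
    relComp (relTensor (cographRel (diag r)) (idRel r)) (cographRel (diag r)) =
      relComp
        (graphRel (prod.lift (prod.fst ≫ prod.fst)
          (prod.lift (prod.fst ≫ prod.snd) prod.snd) : (r ⨯ r) ⨯ r ⟶ r ⨯ (r ⨯ r)))
        (relComp (relTensor (idRel r) (cographRel (diag r))) (cographRel (diag r))) ∧
    -- commutativity (precomposition with the braiding)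
    relComp (graphRel (prod.lift prod.snd prod.fst : r ⨯ r ⟶ r ⨯ r))
        (cographRel (diag r)) =
      cographRel (diag r) :=
  statement19_general r
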